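/- Given strings a₁, …, a_n ∈ {0,1,2}^L, there exist permutations π₁, …, π_n ∈ S_{3L} such that d_H(a_i, a_j) = d_U(π_i, π_j) for all i, j ∈ [n]. Concretely, π_i is obtained from a_i by replacing the k-th character c by a block of three fresh symbols arranged as σ_c shifted appropriately, where σ₀ = 123, σ₁ = 231, σ₂ = 312, using the same three symbols for position k across all strings. -/

import Mathlib

/-- Length of a longest common subsequence of two strings (lists over ℕ). -/
noncomputable def LCS (x y : List ℕ) : ℕ :=
  sSup {k | ∃ s : List ℕ, s.Sublist x ∧ s.Sublist y ∧ s.length = k}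

/-- Ulam distance between permutations, via `d_U(σ,τ) = |σ| − LCS(σ,τ)`. -/
noncomputable def ulamDist (x y : List ℕ) : ℕ := x.length - LCS x y

/-- `π` is a permutation of `[n] = {1,…,n}` viewed as a string. -/
def IsPermOf (n : ℕ) (π : List ℕ) : Prop := π.Perm (List.range' 1 n)

/-!
Position `k` of a string is encoded by a rotation of `123` written on the private alphabet
`{3k+1, 3k+2, 3k+3}`. Since these alphabets are disjoint and occur in the same order in every
encoding, a common subsequence splits into common subsequences of corresponding blocks, so the
LCS of two encodings is the sum of the blockwise LCSs. Two rotations of `123` have LCS `3` if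
they are equal and `2` otherwise, so `3L - LCS` counts the positions where the strings differ.
-/

open List hiding Disjoint
open Function

section LCS

variable {x y s : List ℕ} {ι : Type*} {A : ι → Finset ℕ} {F G : ι → List ℕ}

theorem bddAbove_commonSublist_lengths (x y : List ℕ) :
    BddAbove {k | ∃ s : List ℕ, s <+ x ∧ s <+ y ∧ s.length = k} :=
  ⟨x.length, by rintro _ ⟨s, hx, -, rfl⟩; exact hx.length_le⟩

theorem length_le_LCS (hx : s <+ x) (hy : s <+ y) : s.length ≤ LCS x y :=
  le_csSup (bddAbove_commonSublist_lengths x y) ⟨s, hx, hy, rfl⟩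

theorem exists_common_sublist_length_eq_LCS (x y : List ℕ) :
    ∃ s, s <+ x ∧ s <+ y ∧ s.length = LCS x y :=
  Nat.sSup_mem (s := {k | ∃ s : List ℕ, s <+ x ∧ s <+ y ∧ s.length = k})
    ⟨0, [], nil_sublist x, nil_sublist y, rfl⟩ (bddAbove_commonSublist_lengths x y)

theorem LCS_eq_of_forall_length_le (hx : s <+ x) (hy : s <+ y)
    (h : ∀ t, t <+ x → t <+ y → t.length ≤ s.length) : LCS x y = s.length := by
  obtain ⟨t, htx, hty, ht⟩ := exists_common_sublist_length_eq_LCS x y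
  exact le_antisymm (ht ▸ h t htx hty) (length_le_LCS hx hy)

theorem LCS_map_of_injective {f : ℕ → ℕ} (hf : f.Injective) (x y : List ℕ) :
    LCS (x.map f) (y.map f) = LCS x y := by
  obtain ⟨s, hx, hy, hs⟩ := exists_common_sublist_length_eq_LCS x y
  rw [← hs, ← length_map (f := f)]
  refine LCS_eq_of_forall_length_le (hx.map f) (hy.map f) fun t htx hty => ?_
  obtain ⟨u, hux, rfl⟩ := sublist_map_iff.mp htx
  obtain ⟨v, hvy, huv⟩ := sublist_map_iff.mp hty
  obtain rfl := map_injective_iff.mpr hf huv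
  simpa [hs] using length_le_LCS hux hvy

theorem filter_flatMap_cons_of_disjoint {α ι : Type*} [DecidableEq α] {A : ι → Finset α}
    {B : ι → List α} {k : ι} {l : List ι} (hkl : ∀ j ∈ l, Disjoint (A k) (A j))
    (hB : ∀ j ∈ k :: l, ∀ v ∈ B j, v ∈ A j) :
    ((k :: l).flatMap B).filter (· ∈ A k) = B k ∧
      ((k :: l).flatMap B).filter (fun v => !decide (v ∈ A k)) = l.flatMap B := by
  have hin : ∀ v ∈ B k, v ∈ A k := hB k mem_cons_self
  have hout : ∀ v ∈ l.flatMap B, v ∉ A k := by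
    simp only [mem_flatMap]
    rintro v ⟨j, hj, hv⟩
    exact Finset.disjoint_right.mp (hkl j hj) (hB j (mem_cons_of_mem k hj) v hv)
  simp only [flatMap_cons, filter_append]
  constructor
  · rw [filter_eq_self.mpr (by simpa using hin), filter_eq_nil_iff.mpr (by simpa using hout),
      append_nil]
  · rw [filter_eq_nil_iff.mpr (by simpa using hin), filter_eq_self.mpr (by simpa using hout),
      nil_append]

theorem length_le_sum_LCS_of_sublist_flatMap (l : List ι) (hA : l.Pairwise (Disjoint on A))
    (hF : ∀ k ∈ l, ∀ v ∈ F k, v ∈ A k) (hG : ∀ k ∈ l, ∀ v ∈ G k, v ∈ A k)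
    (hsF : s <+ l.flatMap F) (hsG : s <+ l.flatMap G) :
    s.length ≤ (l.map fun k => LCS (F k) (G k)).sum := by
  induction l generalizing s with
  | nil => simp_all
  | cons k l ih =>
    obtain ⟨hkl, hl⟩ := pairwise_cons.mp hA
    obtain ⟨hFk, hFl⟩ := filter_flatMap_cons_of_disjoint hkl hF
    obtain ⟨hGk, hGl⟩ := filter_flatMap_cons_of_disjoint hkl hG
    rw [length_eq_length_filter_add (fun v => decide (v ∈ A k)), map_cons, sum_cons]
    gcongr
    · exact length_le_LCS (hFk ▸ hsF.filter _) (hGk ▸ hsG.filter _)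
    · exact ih hl (fun j hj => hF j (mem_cons_of_mem k hj))
        (fun j hj => hG j (mem_cons_of_mem k hj)) (hFl ▸ hsF.filter _) (hGl ▸ hsG.filter _)

theorem LCS_flatMap_of_pairwise_disjoint (l : List ι) (hA : l.Pairwise (Disjoint on A))
    (hF : ∀ k ∈ l, ∀ v ∈ F k, v ∈ A k) (hG : ∀ k ∈ l, ∀ v ∈ G k, v ∈ A k) :
    LCS (l.flatMap F) (l.flatMap G) = (l.map fun k => LCS (F k) (G k)).sum := by
  choose t htF htG ht using fun k => exists_common_sublist_length_eq_LCS (F k) (G k)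
  have hlen : (l.flatMap t).length = (l.map fun k => LCS (F k) (G k)).sum := by
    simp [length_flatMap, ht]
  rw [← hlen]
  exact LCS_eq_of_forall_length_le (Sublist.flatMap_right l fun k _ => htF k)
    (Sublist.flatMap_right l fun k _ => htG k) fun s hsF hsG =>
      hlen ▸ length_le_sum_LCS_of_sublist_flatMap l hA hF hG hsF hsG

end LCS

theorem flatMap_range_range' (s n L : ℕ) :
    (range L).flatMap (fun k => range' (n * k + s) n) = range' s (n * L) := by
  induction L with
  | zero => simp
  | succ L ih => rw [range_succ, flatMap_append, ih, flatMap_singleton, mul_add_one,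
    ← range'_append, one_mul, add_comm]

def cyclicWord : Fin 3 → List ℕ := ![[1, 2, 3], [2, 3, 1], [3, 1, 2]]

theorem map_cyclicWord_perm (c : Fin 3) (m : ℕ) :
    (cyclicWord c).map (m + ·) ~ range' (m + 1) 3 := by
  rw [← map_add_range']
  exact Perm.map _ (by revert c; decide)

theorem LCS_cyclicWord (c c' : Fin 3) :
    LCS (cyclicWord c) (cyclicWord c') = if c = c' then 3 else 2 := by
  have hex : ∀ c c' : Fin 3, ∃ t ∈ (cyclicWord c).sublists,
      t <+ cyclicWord c' ∧ t.length = if c = c' then 3 else 2 := by decide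
  have hmax : ∀ c c' : Fin 3, ∀ t ∈ (cyclicWord c).sublists,
      t <+ cyclicWord c' → t.length ≤ if c = c' then 3 else 2 := by decide
  obtain ⟨t, ht, htc', hlen⟩ := hex c c'
  rw [← hlen]
  exact LCS_eq_of_forall_length_le (mem_sublists.mp ht) htc' fun u hu hu' =>
    hlen ▸ hmax c c' u (mem_sublists.mpr hu) hu'

def encode {L : ℕ} (x : Fin L → Fin 3) : List ℕ :=
  (finRange L).flatMap fun k => (cyclicWord (x k)).map (3 * (k : ℕ) + ·)

theorem encode_isPermOf {L : ℕ} (x : Fin L → Fin 3) : IsPermOf (3 * L) (encode x) := by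
  refine (Perm.flatMap_left _ fun k _ => map_cyclicWord_perm (x k) (3 * k)).trans ?_
  rw [← flatMap_range_range', ← map_coe_finRange_eq_range, flatMap_map]

theorem LCS_encode {L : ℕ} (x y : Fin L → Fin 3) :
    LCS (encode x) (encode y) = ∑ k, if x k = y k then 3 else 2 := by
  let A : Fin L → Finset ℕ := fun k => (range' (3 * (k : ℕ) + 1) 3).toFinset
  have hmem : ∀ (z : Fin L → Fin 3) (k : Fin L),
      ∀ v ∈ (cyclicWord (z k)).map (3 * (k : ℕ) + ·), v ∈ A k :=
    fun z k v hv => mem_toFinset.mpr ((map_cyclicWord_perm (z k) _).subset hv)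
  have hdisj : (finRange L).Pairwise (Disjoint on A) := by
    refine (nodup_finRange L).imp fun {j k} hjk => Finset.disjoint_left.mpr fun v hj hk => hjk ?_
    simp only [A, mem_toFinset, mem_range'_1] at hj hk
    omega
  rw [encode, encode, Fin.sum_univ_def,
    LCS_flatMap_of_pairwise_disjoint _ hdisj (fun k _ => hmem x k) (fun k _ => hmem y k)]
  simp only [LCS_map_of_injective (add_right_injective _), LCS_cyclicWord]

theorem LCS_encode_add_hammingDist {L : ℕ} (x y : Fin L → Fin 3) :
    LCS (encode x) (encode y) + hammingDist x y = 3 * L := by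
  rw [LCS_encode, hammingDist, Finset.card_filter, ← Finset.sum_add_distrib]
  have hterm : ∀ k, ((if x k = y k then 3 else 2) + if x k ≠ y k then 1 else 0) = 3 := by
    intro k; split_ifs <;> simp_all
  rw [Finset.sum_const_nat fun k _ => hterm k, Finset.card_univ, Fintype.card_fin, mul_comm]

theorem ulamDist_encode {L : ℕ} (x y : Fin L → Fin 3) :
    ulamDist (encode x) (encode y) = hammingDist x y := by
  have := LCS_encode_add_hammingDist x y
  rw [ulamDist, (encode_isPermOf x).length_eq, length_range']
  omega

theorem embed_hamming_small_alphabet (n L : ℕ) (a : Fin n → Fin L → Fin 3) :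
    ∃ π : Fin n → List ℕ, (∀ i, IsPermOf (3 * L) (π i)) ∧
      ∀ i j, (Finset.univ.filter fun k => a i k ≠ a j k).card = ulamDist (π i) (π j) :=
  ⟨fun i => encode (a i), fun i => encode_isPermOf (a i), fun _ _ => (ulamDist_encode _ _).symm⟩
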